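/- Let G be a finite simple graph without isolated vertices. If G has a minimum dominating set D that is an independent set, then γ⁻¹(G) ≤ α(G). -/

import Mathlib

/-- `D` is a dominating set of `G`: every vertex lies in `D` or has a neighbor in `D`. -/
def IsDomSet {V : Type*} (G : SimpleGraph V) (D : Set V) : Prop :=
  ∀ v : V, v ∈ D ∨ ∃ u ∈ D, G.Adj u v

/-- `S` is an independent set of `G`. -/
def IsIndep {V : Type*} (G : SimpleGraph V) (S : Set V) : Prop :=
  S.Pairwise fun u v => ¬ G.Adj u v

/-- The domination number of `G`: the minimum size of a dominating set. -/
noncomputable def gamma {V : Type*} (G : SimpleGraph V) : ℕ :=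
  sInf {n | ∃ D : Set V, IsDomSet G D ∧ D.ncard = n}

/-- The independence number of `G`: the maximum size of an independent set. -/
noncomputable def alpha {V : Type*} (G : SimpleGraph V) : ℕ :=
  sSup {n | ∃ S : Set V, IsIndep G S ∧ S.ncard = n}

/-- The inverse domination number of `G`: the minimum size of a dominating set
disjoint from some minimum dominating set. -/
noncomputable def invGamma {V : Type*} (G : SimpleGraph V) : ℕ :=
  sInf {n | ∃ D T : Set V, IsDomSet G D ∧ D.ncard = gamma G ∧
    IsDomSet G T ∧ D ∩ T = ∅ ∧ T.ncard = n}

/-- The independence number of the subgraph of `G` induced by `D`. -/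
noncomputable def alphaOn {V : Type*} (G : SimpleGraph V) (D : Set V) : ℕ :=
  sSup {n | ∃ S : Set V, S ⊆ D ∧ IsIndep G S ∧ S.ncard = n}

/-- The number of edges of the subgraph of `G` induced by `D`. -/
noncomputable def edgeCountOn {V : Type*} (G : SimpleGraph V) (D : Set V) : ℕ :=
  {e ∈ G.edgeSet | ∀ v ∈ e, v ∈ D}.ncard

/-- `D` is an optimal dominating set: of minimum size; among those, `G[D]` has
maximum independence number; and subject to that, `G[D]` has fewest edges. -/
def IsOptimalDomSet {V : Type*} (G : SimpleGraph V) (D : Set V) : Prop :=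
  IsDomSet G D ∧ D.ncard = gamma G ∧
  (∀ D' : Set V, IsDomSet G D' → D'.ncard = gamma G → alphaOn G D' ≤ alphaOn G D) ∧
  (∀ D' : Set V, IsDomSet G D' → D'.ncard = gamma G →
    alphaOn G D' = alphaOn G D → edgeCountOn G D ≤ edgeCountOn G D')

/-- `w` is a private neighbor of `v` with respect to `D`: `w ∉ D` and `N(w) ∩ D = {v}`. -/
def IsPrivateNbr {V : Type*} (G : SimpleGraph V) (D : Set V) (v w : V) : Prop :=
  w ∉ D ∧ G.Adj v w ∧ ∀ u ∈ D, G.Adj u w → u = v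

/-- `R` is a partial independent set of representatives (partial ISR) for the family `P`:
an independent set consisting of distinct representatives of some subfamily of `P`. -/
def IsPartialISR {V : Type*} (G : SimpleGraph V) {n : ℕ} (P : Fin n → Set V)
    (R : Set V) : Prop :=
  IsIndep G R ∧ ∃ (J : Set (Fin n)) (x : Fin n → V),
    Set.InjOn x J ∧ (∀ j ∈ J, x j ∈ P j) ∧ R = x '' J

/-- `b(G)`: the largest number of vertices of an induced bipartite subgraph of `G`. -/
noncomputable def bipNum {V : Type*} (G : SimpleGraph V) : ℕ :=
  sSup {n | ∃ B A : Set V, A ⊆ B ∧ IsIndep G A ∧ IsIndep G (B \ A) ∧ B.ncard = n}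

/-!
Take an independent set `M ⊆ V \ D` that is maximal by inclusion, so that `M` dominates
`V \ D`, and let `U ⊆ D` be the vertices of `D` with no neighbour in `M`. Since `D` is
independent, `M ∪ U` is independent, so `|M| + |U| ≤ α(G)`. Replacing each `u ∈ U` by a
neighbour of `u` (which lies outside `D`, again because `D` is independent) turns `M ∪ U` into a
dominating set disjoint from `D` of size at most `|M| + |U|`.
-/

open Set

section

variable {V : Type*} {G : SimpleGraph V}

lemma ncard_le_alpha [Finite V] {S : Set V} (hS : IsIndep G S) : S.ncard ≤ alpha G :=
  le_csSup ⟨Nat.card V, by rintro n ⟨S, -, rfl⟩; exact ncard_le_card S⟩ ⟨S, hS, rfl⟩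

lemma invGamma_le_ncard {D T : Set V} (hD : IsDomSet G D) (hDmin : D.ncard = gamma G)
    (hT : IsDomSet G T) (hDT : Disjoint D T) : invGamma G ≤ T.ncard :=
  Nat.sInf_le ⟨D, T, hD, hDmin, hT, hDT.inter_eq, rfl⟩

lemma exists_isIndep_subset_dominating [Finite V] (A : Set V) :
    ∃ M ⊆ A, IsIndep G M ∧ ∀ v ∈ A, v ∉ M → ∃ m ∈ M, G.Adj m v := by
  obtain ⟨M, ⟨hMA, hM⟩, hmax⟩ := (toFinite {S : Set V | S ⊆ A ∧ IsIndep G S}).exists_maximal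
    ⟨∅, empty_subset A, pairwise_empty _⟩
  refine ⟨M, hMA, hM, fun v hvA hvM => ?_⟩
  by_contra! hv
  have hins : insert v M ⊆ A ∧ IsIndep G (insert v M) :=
    ⟨insert_subset hvA hMA, hM.insert fun m hm _ => ⟨fun h => hv m hm h.symm, hv m hm⟩⟩
  exact hvM (hmax hins (subset_insert v M) (mem_insert v M))

lemma isIndep_union_undominated {D M : Set V} (hD : IsIndep G D) (hM : IsIndep G M) :
    IsIndep G (M ∪ {v ∈ D | ∀ m ∈ M, ¬ G.Adj m v}) :=
  pairwise_union.2 ⟨hM, hD.mono (sep_subset _ _),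
    fun m hm _ hv _ => ⟨hv.2 m hm, fun h => hv.2 m hm h.symm⟩⟩

lemma isDomSet_union_image_undominated {D M : Set V} {g : V → V} (hg : ∀ v, G.Adj v (g v))
    (hMdom : ∀ v ∉ D, v ∉ M → ∃ m ∈ M, G.Adj m v) :
    IsDomSet G (M ∪ g '' {v ∈ D | ∀ m ∈ M, ¬ G.Adj m v}) := by
  intro v
  by_cases hvM : v ∈ M
  · exact .inl (.inl hvM)
  by_cases hv : v ∈ D ∧ ∀ m ∈ M, ¬ G.Adj m v
  · exact .inr ⟨g v, .inr ⟨v, hv, rfl⟩, (hg v).symm⟩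
  obtain ⟨m, hm, hmv⟩ : ∃ m ∈ M, G.Adj m v := by
    by_cases hvD : v ∈ D
    · simpa [hvD] using hv
    · exact hMdom v hvD hvM
  exact .inr ⟨m, .inl hm, hmv⟩

theorem exists_isDomSet_disjoint_ncard_le_alpha [Finite V] (hiso : ∀ v, ∃ u, G.Adj v u)
    {D : Set V} (hD : IsIndep G D) : ∃ T, IsDomSet G T ∧ Disjoint D T ∧ T.ncard ≤ alpha G := by
  choose g hg using hiso
  obtain ⟨M, hMD, hM, hMdom⟩ := exists_isIndep_subset_dominating (G := G) Dᶜ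
  set U := {v ∈ D | ∀ m ∈ M, ¬ G.Adj m v}
  have hgU : Disjoint D (g '' U) := by
    refine disjoint_left.2 ?_
    rintro _ hgvD ⟨v, hv, rfl⟩
    exact hD hv.1 hgvD (hg v).ne (hg v)
  refine ⟨M ∪ g '' U, isDomSet_union_image_undominated hg hMdom,
    disjoint_union_right.2 ⟨subset_compl_iff_disjoint_left.1 hMD, hgU⟩, ?_⟩
  calc (M ∪ g '' U).ncard ≤ M.ncard + (g '' U).ncard := ncard_union_le _ _
    _ ≤ M.ncard + U.ncard := Nat.add_le_add_left (ncard_image_le (toFinite U)) _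
    _ = (M ∪ U).ncard := (ncard_union_eq
        (disjoint_left.2 fun _ hxM hxU => hMD hxM hxU.1) (toFinite M) (toFinite U)).symm
    _ ≤ alpha G := ncard_le_alpha (isIndep_union_undominated hD hM)

end

theorem inverse_domination_of_indep_min_dom {V : Type*} [Fintype V] (G : SimpleGraph V)
    (hiso : ∀ v : V, ∃ u, G.Adj v u)
    (D : Set V) (hDdom : IsDomSet G D) (hDmin : D.ncard = gamma G)
    (hDind : IsIndep G D) :
    invGamma G ≤ alpha G := by
  obtain ⟨T, hT, hDT, hTα⟩ := exists_isDomSet_disjoint_ncard_le_alpha hiso hDind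
  exact (invGamma_le_ncard hDdom hDmin hT hDT).trans hTα
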